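/- arXiv:1907.13101 — 4 statements merged into one kernel-verified Lean document; each statement's English description precedes it below -/
import Mathlib

section
/- For the 2×2 degree-1 matrix polynomials A(λ) = [[λ-1, 0],[1, λ-1]] and B(λ) = [[λ, 1],[0, λ-2]], the 4×4 Sylvester resultant S(A,B) = [[A₁, A₀],[B₁, B₀]] has a nontrivial kernel (the vector (1,-2,1,-1)ᵀ is in its kernel), yet A and B have no common eigenvalues, i.e., det A(λ) and det B(λ) have no common roots. -/
/-- For `A(λ) = [[λ-1,0],[1,λ-1]]` and `B(λ) = [[λ,1],[0,λ-2]]`, the Sylvester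
resultant `[[A₁,A₀],[B₁,B₀]]` has the nonzero vector `(1,-2,1,-1)` in its kernel,
yet `det A(λ)` and `det B(λ)` have no common roots. -/
theorem sylvester_kernel_without_common_eigenvalue :
    ((!![(1:ℂ),0,-1,0; 0,1,1,-1; 1,0,0,1; 0,1,0,-2] :
        Matrix (Fin 4) (Fin 4) ℂ).mulVec ![1,-2,1,-1] = 0 ∧
      (![1,-2,1,-1] : Fin 4 → ℂ) ≠ 0) ∧
    ∀ l : ℂ, ¬ ((!![l-1, 0; 1, l-1] : Matrix (Fin 2) (Fin 2) ℂ).det = 0 ∧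
        (!![l, 1; 0, l-2] : Matrix (Fin 2) (Fin 2) ℂ).det = 0) := by
  refine ⟨⟨?_, ?_⟩, ?_⟩
  · funext i
    fin_cases i <;> simp [Matrix.mulVec, dotProduct, Fin.sum_univ_succ]; ring
  · intro h
    have := congrFun h 0
    simp at this
  · rintro l ⟨h1, h2⟩
    simp [Matrix.det_fin_two] at h1 h2
    have hl1 : l = 1 := sub_eq_zero.mp h1
    rw [hl1] at h2
    norm_num at h2
end

section
/- Along the flow Ė = −P_S(uvᵀ) + ⟨E, P_S(uvᵀ)⟩E with ‖E‖_F = 1 and σ > 0 simple, the following are equivalent: (1) σ̇ = 0; (2) Ė = 0; (3) E is a real scalar multiple of P_S(uvᵀ). -/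
open Matrix

/-- Frobenius inner product of two real matrices. -/
def frob {α β : Type*} [Fintype α] [Fintype β] (A B : Matrix α β ℝ) : ℝ :=
  ∑ i, ∑ j, A i j * B i j

/-!
Since `P` is the orthogonal projection of `uvᵀ` onto `S` and `Ŝ ∈ S`, we get
`⟨P, Ŝ⟩ = ⟨uvᵀ, Ŝ⟩ = uᵀŜv = σ ≠ 0`, so `P ≠ 0`. Flattened, `frob` is the Euclidean inner product,
and for a unit vector `e` one has `‖x - ⟨e, x⟩ e‖² = ‖x‖² - ⟨e, x⟩²`: equality holds in
Cauchy–Schwarz exactly when `x = ⟨e, x⟩ e`, which for `x ≠ 0` says that `e` is a multiple of `x`.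
-/

open scoped RealInnerProductSpace

section InnerProductSpace

variable {F : Type*} [NormedAddCommGroup F] [InnerProductSpace ℝ F] {e x : F}

theorem real_inner_sq_eq_inner_self_iff (he : ⟪e, e⟫ = 1) :
    ⟪e, x⟫ ^ 2 = ⟪x, x⟫ ↔ x = ⟪e, x⟫ • e := by
  have h : ⟪x - ⟪e, x⟫ • e, x - ⟪e, x⟫ • e⟫ = ⟪x, x⟫ - ⟪e, x⟫ ^ 2 := by
    simp only [inner_sub_left, inner_sub_right, real_inner_smul_left, real_inner_smul_right,
      real_inner_comm e x, he]
    ring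
  rw [← sub_eq_zero (a := x), ← inner_self_eq_zero (𝕜 := ℝ), h, sub_eq_zero, eq_comm]

theorem eq_real_inner_smul_iff_exists_eq_smul (he : ⟪e, e⟫ = 1) (hx : x ≠ 0) :
    x = ⟪e, x⟫ • e ↔ ∃ r : ℝ, e = r • x := by
  constructor
  · intro h
    have hc : ⟪e, x⟫ ≠ 0 := fun h0 => hx (by rw [h, h0, zero_smul])
    exact ⟨⟪e, x⟫⁻¹, by rw [eq_inv_smul_iff₀ hc, ← h]⟩
  · rintro ⟨r, rfl⟩
    have hr : r * r * ⟪x, x⟫ = 1 := by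
      rwa [real_inner_smul_left, real_inner_smul_right, ← mul_assoc] at he
    rw [real_inner_smul_left, smul_smul, show r * ⟪x, x⟫ * r = 1 by rw [← hr]; ring, one_smul]

end InnerProductSpace

section Frob

variable {α β : Type*} [Fintype α] [Fintype β]

noncomputable def Matrix.toEuclideanSpace : Matrix α β ℝ ≃ₗ[ℝ] EuclideanSpace ℝ (α × β) :=
  (ofLinearEquiv ℝ).symm ≪≫ₗ (LinearEquiv.curry ℝ ℝ α β).symm ≪≫ₗ
    (WithLp.linearEquiv 2 ℝ (α × β → ℝ)).symm

theorem frob_eq_inner (A B : Matrix α β ℝ) :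
    frob A B = ⟪A.toEuclideanSpace, B.toEuclideanSpace⟫ := by
  simp [frob, toEuclideanSpace, PiLp.inner_apply, Fintype.sum_prod_type, mul_comm]

theorem frob_vecMulVec_left (u : α → ℝ) (v : β → ℝ) (A : Matrix α β ℝ) :
    frob (vecMulVec u v) A = u ⬝ᵥ (A *ᵥ v) := by
  simp only [frob, vecMulVec_apply, dotProduct, mulVec, Finset.mul_sum]
  exact Finset.sum_congr rfl fun i _ => Finset.sum_congr rfl fun j _ => by ring

variable {E P : Matrix α β ℝ}

theorem frob_sq_eq_frob_self_iff (hE : frob E E = 1) :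
    frob E P ^ 2 = frob P P ↔ P = frob E P • E := by
  simp only [frob_eq_inner] at hE ⊢
  rw [real_inner_sq_eq_inner_self_iff hE, ← toEuclideanSpace.injective.eq_iff, map_smul]

theorem eq_frob_smul_iff_exists_eq_smul (hE : frob E E = 1) (hP : P ≠ 0) :
    P = frob E P • E ↔ ∃ r : ℝ, E = r • P := by
  rw [frob_eq_inner] at hE ⊢
  simpa only [← map_smul, toEuclideanSpace.injective.eq_iff] using
    eq_real_inner_smul_iff_exists_eq_smul hE (toEuclideanSpace.map_ne_zero_iff.2 hP)

end Frob

theorem stationary_point_characterization_general (p q : ℕ)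
    (S : Submodule ℝ (Matrix (Fin p) (Fin q) ℝ))
    (Shat : Matrix (Fin p) (Fin q) ℝ) (hShat : Shat ∈ S)
    (σ : ℝ) (hσ : 0 < σ)
    (u : Fin p → ℝ) (v : Fin q → ℝ) (hu : u ⬝ᵥ u = 1)
    (hsv : Shat.mulVec v = σ • u)
    (E P : Matrix (Fin p) (Fin q) ℝ)
    (hEnorm : frob E E = 1)
    (hPorth : ∀ Q ∈ S, frob (Matrix.vecMulVec u v - P) Q = 0)
    (ε : ℝ) (hε : 0 < ε) :
    (ε * ((frob E P) ^ 2 - frob P P) = 0 ↔ -P + frob E P • E = 0) ∧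
      (-P + frob E P • E = 0 ↔ ∃ r : ℝ, E = r • P) := by
  have hP : P ≠ 0 := by
    rintro rfl
    have h := hPorth Shat hShat
    rw [sub_zero, frob_vecMulVec_left, hsv, dotProduct_smul, hu, smul_eq_mul, mul_one] at h
    exact hσ.ne' h
  rw [neg_add_eq_zero]
  refine ⟨?_, eq_frob_smul_iff_exists_eq_smul hEnorm hP⟩
  rw [mul_eq_zero, or_iff_right hε.ne', sub_eq_zero, frob_sq_eq_frob_self_iff hEnorm]

/-- Along the constrained gradient flow, with `σ > 0` a singular value of
`Ŝ ∈ S` with unit singular vectors `u, v` and `P = P_S(uvᵀ)`, the following are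
equivalent: `σ̇ = 0`; `Ė = 0`; `E` is a scalar multiple of `P_S(uvᵀ)`. -/
theorem stationary_point_characterization (p q : ℕ)
    (S : Submodule ℝ (Matrix (Fin p) (Fin q) ℝ))
    (Shat : Matrix (Fin p) (Fin q) ℝ) (hShat : Shat ∈ S)
    (σ : ℝ) (hσ : 0 < σ)
    (u : Fin p → ℝ) (v : Fin q → ℝ) (hu : u ⬝ᵥ u = 1) (hv : v ⬝ᵥ v = 1)
    (hsv : Shat.mulVec v = σ • u) (hus : Matrix.vecMul u Shat = σ • v)
    (E P : Matrix (Fin p) (Fin q) ℝ)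
    (hE : E ∈ S) (hEnorm : frob E E = 1)
    (hPmem : P ∈ S) (hPorth : ∀ Q ∈ S, frob (Matrix.vecMulVec u v - P) Q = 0)
    (ε : ℝ) (hε : 0 < ε) :
    (ε * ((frob E P) ^ 2 - frob P P) = 0 ↔ -P + frob E P • E = 0) ∧
      (-P + frob E P • E = 0 ↔ ∃ r : ℝ, E = r • P) :=
  stationary_point_characterization_general p q S Shat hShat σ hσ u v hu hsv E P hEnorm hPorth ε hε
end

section
/- If m×m matrix polynomials Â(λ), B̂(λ) of degree n admit a common right divisor C(λ) of degree d, i.e., Â = Ā·C and B̂ = B̄·C, then the extended Sylvester resultant factors as S_ℓ(Â, B̂) = S_ℓ(Ā, B̄)·τ(C), where τ(C) is the block-Toeplitz matrix of multiplication by C; consequently rank S_ℓ(Â, B̂) ≤ rank τ(C) ≤ 2m(ℓ−n) − md, so S_ℓ(Â, B̂) has a kernel of dimension at least md. -/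
/-!
The two halves of `S_ℓ(Â, B̂)` and `τ(C)` are banded block-Toeplitz matrices: row `j` carries the
coefficients `F_p, …, F_0` starting in block column `j`. Such matrices multiply like the
polynomials they encode: block `(j, c)` of the product of the bands of `F` and `G` is
`∑ₓ F_{p-(x-j)} G_{q-(c-x)}`, and the substitution `y = q - (c - x)` turns it into the
coefficient of degree `N - (c - j)` of `F G`. No term falls outside the `ℓ - d` intermediate
block columns since `(ℓ - n) + (n - d) ≤ ℓ - d`. The rank bounds follow from
`rank (X Y) ≤ rank Y ≤ m (ℓ - d)` and rank–nullity.
-/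

open Matrix

/-- The generalized Sylvester matrix (blocks of size `m × m`, `r` block rows for
each of the two coefficient families, `ℓ` block columns, descending order). -/
def Syl (m n r ℓ : ℕ) (A B : Fin (n + 1) → Matrix (Fin m) (Fin m) ℝ) :
    Matrix ((Fin r ⊕ Fin r) × Fin m) (Fin ℓ × Fin m) ℝ :=
  fun p q =>
    match p, q with
    | (Sum.inl j, i), (c, s) =>
        if (j : ℕ) ≤ (c : ℕ) ∧ (c : ℕ) - (j : ℕ) ≤ n then
          A ⟨n - ((c : ℕ) - (j : ℕ)), Nat.lt_succ_of_le (Nat.sub_le _ _)⟩ i s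
        else 0
    | (Sum.inr j, i), (c, s) =>
        if (j : ℕ) ≤ (c : ℕ) ∧ (c : ℕ) - (j : ℕ) ≤ n then
          B ⟨n - ((c : ℕ) - (j : ℕ)), Nat.lt_succ_of_le (Nat.sub_le _ _)⟩ i s
        else 0

/-- The block-Toeplitz matrix `τ(C)` of right multiplication by the degree-`d`
matrix polynomial `C`, acting on (descending) coefficient block rows. -/
def Toep (m d ℓ : ℕ) (C : Fin (d + 1) → Matrix (Fin m) (Fin m) ℝ) :
    Matrix (Fin (ℓ - d) × Fin m) (Fin ℓ × Fin m) ℝ :=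
  fun p q =>
    if (p.1 : ℕ) ≤ (q.1 : ℕ) ∧ (q.1 : ℕ) - (p.1 : ℕ) ≤ d then
      C ⟨d - ((q.1 : ℕ) - (p.1 : ℕ)), Nat.lt_succ_of_le (Nat.sub_le _ _)⟩ p.2 q.2
    else 0

section Band

variable {S : Type*}

def IsCoeffProduct [AddCommMonoid S] [Mul S] {p q N : ℕ}
    (F : Fin (p + 1) → S) (G : Fin (q + 1) → S) (H : Fin (N + 1) → S) : Prop :=
  ∀ i : Fin (N + 1), H i = ∑ j : Fin (q + 1),
    if h : (j : ℕ) ≤ i ∧ (i : ℕ) - j ≤ p then F ⟨i - j, Nat.lt_succ_of_le h.2⟩ * G j else 0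

def bandEntry [Zero S] {n : ℕ} (f : Fin (n + 1) → S) (x y : ℕ) : S :=
  if x ≤ y ∧ y - x ≤ n then f ⟨n - (y - x), Nat.lt_succ_of_le (Nat.sub_le _ _)⟩ else 0

theorem bandEntry_of_le [Zero S] {n : ℕ} (f : Fin (n + 1) → S) {x y : ℕ}
    (h : x ≤ y ∧ y - x ≤ n) :
    bandEntry f x y = f ⟨n - (y - x), Nat.lt_succ_of_le (Nat.sub_le _ _)⟩ :=
  if_pos h

theorem le_of_bandEntry_ne_zero [Zero S] {n : ℕ} {f : Fin (n + 1) → S} {x y : ℕ}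
    (h : bandEntry f x y ≠ 0) : x ≤ y ∧ y - x ≤ n :=
  by_contra fun hxy => h (if_neg hxy)

theorem sum_bandEntry_mul_bandEntry [NonUnitalNonAssocSemiring S] {p q N k : ℕ}
    (hN : p + q = N) {F : Fin (p + 1) → S} {G : Fin (q + 1) → S} {H : Fin (N + 1) → S}
    (hH : IsCoeffProduct F G H) {j c : ℕ} (hj : j + p < k) :
    ∑ x : Fin k, bandEntry F j x * bandEntry G x c = bandEntry H j c := by
  by_cases hjc : j ≤ c ∧ c - j ≤ N
  · rw [bandEntry_of_le H hjc, hH]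
    have cond_of_ne_zero {y : Fin (q + 1)}
        (hy : (if h : (y : ℕ) ≤ N - (c - j) ∧ N - (c - j) - y ≤ p then
          F ⟨N - (c - j) - y, by omega⟩ * G y else 0) ≠ 0) :
        (y : ℕ) ≤ N - (c - j) ∧ N - (c - j) - y ≤ p :=
      by_contra fun h => hy (dif_neg h)
    have term_eq {y : Fin (q + 1)} (hy : (y : ℕ) ≤ N - (c - j) ∧ N - (c - j) - y ≤ p) :
        F ⟨N - (c - j) - y, by omega⟩ * G y =
          bandEntry F j (c - (q - y)) * bandEntry G (c - (q - y)) c := by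
      have := y.isLt
      rw [bandEntry_of_le F (by omega), bandEntry_of_le G (by omega)]
      congr 2 <;> ext <;> simp only <;> omega
    symm
    refine Finset.sum_bij_ne_zero (fun y _ hy => (⟨c - (q - y), ?_⟩ : Fin k))
      (fun _ _ _ => Finset.mem_univ _) ?_ ?_ ?_
    · have := cond_of_ne_zero hy
      omega
    · intro y₁ _ hy₁ y₂ _ hy₂ hy
      have := cond_of_ne_zero hy₁
      have := cond_of_ne_zero hy₂
      simp only [Fin.mk.injEq] at hy
      exact Fin.ext (by omega)
    · intro x _ hx
      have hF := le_of_bandEntry_ne_zero (left_ne_zero_of_mul hx)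
      have hG := le_of_bandEntry_ne_zero (right_ne_zero_of_mul hx)
      have hy : q - (c - x) ≤ N - (c - j) ∧ N - (c - j) - (q - (c - x)) ≤ p := by omega
      refine ⟨⟨q - (c - x), by omega⟩, Finset.mem_univ _, ?_, Fin.ext (by simp only; omega)⟩
      rw [dif_pos hy, term_eq hy]
      convert hx using 3 <;> simp only <;> omega
    · intro y _ hy
      rw [dif_pos (cond_of_ne_zero hy), term_eq (cond_of_ne_zero hy)]
  · rw [bandEntry, if_neg hjc]
    refine Finset.sum_eq_zero fun x _ => ?_
    unfold bandEntry
    split_ifs <;> first | simp | omega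

end Band

namespace Matrix

variable {R ι : Type*}

def blockToeplitz [Zero R] {n : ℕ} (r ℓ : ℕ) (f : Fin (n + 1) → Matrix ι ι R) :
    Matrix (Fin r × ι) (Fin ℓ × ι) R :=
  fun x y =>
    if (x.1 : ℕ) ≤ (y.1 : ℕ) ∧ (y.1 : ℕ) - (x.1 : ℕ) ≤ n then
      f ⟨n - ((y.1 : ℕ) - (x.1 : ℕ)), Nat.lt_succ_of_le (Nat.sub_le _ _)⟩ x.2 y.2
    else 0

theorem blockToeplitz_apply [Zero R] {n r ℓ : ℕ} (f : Fin (n + 1) → Matrix ι ι R)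
    (x : Fin r × ι) (y : Fin ℓ × ι) :
    blockToeplitz r ℓ f x y = bandEntry f x.1 y.1 x.2 y.2 := by
  unfold blockToeplitz bandEntry
  split_ifs <;> rfl

theorem blockToeplitz_mul_blockToeplitz [NonUnitalNonAssocSemiring R] [Fintype ι]
    {p q N r k ℓ : ℕ} (hN : p + q = N) (hk : r + p ≤ k)
    {F : Fin (p + 1) → Matrix ι ι R} {G : Fin (q + 1) → Matrix ι ι R}
    {H : Fin (N + 1) → Matrix ι ι R} (hH : IsCoeffProduct F G H) :
    blockToeplitz r k F * blockToeplitz k ℓ G = blockToeplitz r ℓ H := by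
  ext ⟨j, i⟩ ⟨c, s⟩
  rw [mul_apply, Fintype.sum_prod_type, blockToeplitz_apply,
    ← sum_bandEntry_mul_bandEntry hN hH (by omega : (j : ℕ) + p < k), sum_apply]
  simp only [blockToeplitz_apply, mul_apply]

theorem rank_add_finrank_ker_mulVecLin {K α β : Type*} [Field K] [Fintype α] [Fintype β]
    (M : Matrix α β K) :
    M.rank + Module.finrank K (LinearMap.ker M.mulVecLin) = Fintype.card β := by
  rw [rank, LinearMap.finrank_range_add_finrank_ker, Module.finrank_fintype_fun_eq_card]

end Matrix

theorem Syl_mul_Toep {m n d ℓ : ℕ} (hd : d ≤ n) (hn : n ≤ ℓ)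
    {A B : Fin (n + 1) → Matrix (Fin m) (Fin m) ℝ}
    {Abar Bbar : Fin (n - d + 1) → Matrix (Fin m) (Fin m) ℝ}
    {C : Fin (d + 1) → Matrix (Fin m) (Fin m) ℝ}
    (hA : IsCoeffProduct Abar C A) (hB : IsCoeffProduct Bbar C B) :
    Syl m (n - d) (ℓ - n) (ℓ - d) Abar Bbar * Toep m d ℓ C = Syl m n (ℓ - n) ℓ A B := by
  have hN : n - d + d = n := by omega
  have hk : ℓ - n + (n - d) ≤ ℓ - d := by omega
  -- `Toep` and the two halves of the rows of `Syl` are `blockToeplitz` matrices by definition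
  ext ⟨j | j, i⟩ q
  · exact congrFun (congrFun (blockToeplitz_mul_blockToeplitz hN hk hA) (j, i)) q
  · exact congrFun (congrFun (blockToeplitz_mul_blockToeplitz hN hk hB) (j, i)) q

/-- If `Â = Ā·C` and `B̂ = B̄·C` with `C` monic of degree `d`, then the extended
Sylvester resultant factors as `S_ℓ(Â,B̂) = S_ℓ(Ā,B̄)·τ(C)`; consequently
`rank S_ℓ(Â,B̂) ≤ rank τ(C) ≤ mℓ − md` and the kernel of `S_ℓ(Â,B̂)` has
dimension at least `md`. -/
theorem sylvester_factorization_common_divisor (m n d ℓ : ℕ)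
    (hd : d ≤ n) (hn : n ≤ ℓ)
    (A B : Fin (n + 1) → Matrix (Fin m) (Fin m) ℝ)
    (Abar Bbar : Fin (n - d + 1) → Matrix (Fin m) (Fin m) ℝ)
    (C : Fin (d + 1) → Matrix (Fin m) (Fin m) ℝ)
    (hA : ∀ k : Fin (n + 1), A k = ∑ j : Fin (d + 1),
      if h : (j : ℕ) ≤ (k : ℕ) ∧ (k : ℕ) - (j : ℕ) ≤ n - d then
        Abar ⟨(k : ℕ) - (j : ℕ), by omega⟩ * C j else 0)
    (hB : ∀ k : Fin (n + 1), B k = ∑ j : Fin (d + 1),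
      if h : (j : ℕ) ≤ (k : ℕ) ∧ (k : ℕ) - (j : ℕ) ≤ n - d then
        Bbar ⟨(k : ℕ) - (j : ℕ), by omega⟩ * C j else 0) :
    Syl m n (ℓ - n) ℓ A B =
        Syl m (n - d) (ℓ - n) (ℓ - d) Abar Bbar * Toep m d ℓ C ∧
      (Syl m n (ℓ - n) ℓ A B).rank ≤ (Toep m d ℓ C).rank ∧
      (Toep m d ℓ C).rank ≤ m * ℓ - m * d ∧
      m * d ≤ Module.finrank ℝ
        (LinearMap.ker (Matrix.mulVecLin (Syl m n (ℓ - n) ℓ A B))) := by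
  have hfact := (Syl_mul_Toep (ℓ := ℓ) hd hn hA hB).symm
  have hToep : (Toep m d ℓ C).rank ≤ m * ℓ - m * d :=
    calc (Toep m d ℓ C).rank ≤ Fintype.card (Fin (ℓ - d) × Fin m) := rank_le_card_height _
      _ = m * ℓ - m * d := by simp [Nat.mul_sub, Nat.mul_comm]
  have hSyl : (Syl m n (ℓ - n) ℓ A B).rank ≤ (Toep m d ℓ C).rank :=
    hfact ▸ rank_mul_le_right _ _
  refine ⟨hfact, hSyl, hToep, ?_⟩
  have hnullity := rank_add_finrank_ker_mulVecLin (Syl m n (ℓ - n) ℓ A B)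
  have hdℓ : m * d ≤ m * ℓ := Nat.mul_le_mul_left m (hd.trans hn)
  rw [Fintype.card_prod, Fintype.card_fin, Fintype.card_fin, Nat.mul_comm] at hnullity
  omega
end

section
/- Let τ(C) be the block-Toeplitz matrix of a monic m×m matrix polynomial C of degree d, and let V₀ be a matrix whose columns span the orthogonal complement of the row space of τ(C). Then τ(C)·V₀ = 0, and the coefficient matrix [C₀ C₁ … C_{d-1} I] of C lies in the left null space of the block-Hankel matrix K = [H(V_{md}), …, H(V₁)] formed by reshaping the columns Vᵢ of V₀ into block-Hankel matrices with m(d+1) block rows. -/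
open Matrix

/-- The coefficient block row `[C₀ C₁ … C_{d-1} C_d]` of `C` (with `C_d = I`
for monic `C`). -/
def coeffRow (m d : ℕ) (C : Fin (d + 1) → Matrix (Fin m) (Fin m) ℝ) :
    Matrix (Fin m) (Fin (d + 1) × Fin m) ℝ :=
  fun i p => C p.1 i p.2

/-- The block-Hankel matrix obtained by reshaping the columns `Vᵢ` of `V₀` into
block-Hankel form with `d + 1` block rows, stacked horizontally. -/
def hankelStack {ι : Type*} (m d ℓ : ℕ) (V0 : Matrix (Fin ℓ × Fin m) ι ℝ) :
    Matrix (Fin (d + 1) × Fin m) (ι × Fin (ℓ - d)) ℝ :=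
  fun p q =>
    V0 (⟨(q.2 : ℕ) + (d - (p.1 : ℕ)), by
        have h1 := q.2.isLt
        have h2 : d - (p.1 : ℕ) ≤ d := Nat.sub_le _ _
        omega⟩, p.2) q.1

/-! `τ(C)·V₀ = 0` because every column of `V₀` is orthogonal to every row of `τ(C)`. Row `k` of
block row `j` of `τ(C)` carries `C_d, …, C_0` on the block columns `j, …, j + d` and vanishes
elsewhere, so entry `((j, k), i)` of `τ(C)·V₀` is entry `(k, (i, j))` of `[C₀ … C_d]·K`:
the second product is a rearrangement of the first. -/

theorem Matrix.mul_eq_zero_of_cols_mem_orthogonal_span_rows {m n ι : Type*} [Fintype n]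
    (A : Matrix m n ℝ) (V : Matrix n ι ℝ)
    (hV : ∀ i, WithLp.toLp 2 (fun c => V c i) ∈
      (Submodule.span ℝ (Set.range fun r => (WithLp.toLp 2 (A r) : EuclideanSpace ℝ n)))ᗮ) :
    A * V = 0 := by
  ext r i
  have hrow : (WithLp.toLp 2 (A r) : EuclideanSpace ℝ n) ∈
      Submodule.span ℝ (Set.range fun r => (WithLp.toLp 2 (A r) : EuclideanSpace ℝ n)) :=
    Submodule.subset_span ⟨r, rfl⟩
  have h := (Submodule.mem_orthogonal _ _).1 (hV i) _ hrow
  simpa [PiLp.inner_apply, Matrix.mul_apply, mul_comm] using h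

theorem coeffRow_mul_hankelStack_apply {ι : Type*} (m d ℓ : ℕ)
    (C : Fin (d + 1) → Matrix (Fin m) (Fin m) ℝ) (V : Matrix (Fin ℓ × Fin m) ι ℝ)
    (i : Fin m) (a : ι) (j : Fin (ℓ - d)) :
    (coeffRow m d C * hankelStack m d ℓ V) i (a, j) = (Toep m d ℓ C * V) (j, i) a := by
  have hj := j.isLt
  let window : Fin (d + 1) × Fin m → Fin ℓ × Fin m := fun p =>
    (⟨j + (d - p.1), by have := Nat.sub_le d p.1; omega⟩, p.2)
  refine Fintype.sum_of_injective window ?_ _ _ ?_ ?_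
  · intro p q h
    have hp := p.1.isLt
    have hq := q.1.isLt
    simp only [window, Prod.mk.injEq, Fin.mk.injEq] at h
    exact Prod.ext (Fin.ext (by omega)) h.2
  · rintro ⟨c1, c2⟩ hc
    have hout : ¬((j : ℕ) ≤ c1 ∧ (c1 : ℕ) - j ≤ d) := by
      rintro ⟨hlo, hhi⟩
      refine hc ⟨(⟨d - (c1 - j), by omega⟩, c2), Prod.ext (Fin.ext ?_) rfl⟩
      simp only [window]
      omega
    show Toep m d ℓ C (j, i) (c1, c2) * V (c1, c2) a = 0
    simp only [Toep, hout, if_false, zero_mul]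
  · rintro ⟨p1, p2⟩
    have hp := p1.isLt
    have hin : (j : ℕ) ≤ j + (d - p1) ∧ (j + (d - p1) : ℕ) - j ≤ d := by omega
    simp only [Toep, coeffRow, hankelStack, window, hin]
    congr 2
    exact Fin.ext (by simp only; omega)

theorem gcd_from_nullspace_hankel_general {ι : Type*} (m d ℓ : ℕ)
    (C : Fin (d + 1) → Matrix (Fin m) (Fin m) ℝ)
    (V0 : Matrix (Fin ℓ × Fin m) ι ℝ)
    (hspan : Submodule.span ℝ
        (Set.range fun i : ι =>
          (show EuclideanSpace ℝ (Fin ℓ × Fin m) from WithLp.toLp 2 fun c => V0 c i)) =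
      (Submodule.span ℝ
        (Set.range fun r : Fin (ℓ - d) × Fin m =>
          (show EuclideanSpace ℝ (Fin ℓ × Fin m) from WithLp.toLp 2 fun c => Toep m d ℓ C r c)))ᗮ) :
    Toep m d ℓ C * V0 = 0 ∧
      coeffRow m d C * hankelStack m d ℓ V0 = 0 := by
  have hTV : Toep m d ℓ C * V0 = 0 :=
    mul_eq_zero_of_cols_mem_orthogonal_span_rows _ _ fun i =>
      hspan ▸ Submodule.subset_span ⟨i, rfl⟩
  refine ⟨hTV, ?_⟩
  ext i ⟨a, j⟩
  rw [coeffRow_mul_hankelStack_apply, hTV]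
  rfl

/-- If the columns of `V₀` span the orthogonal complement of the row space of
`τ(C)`, then `τ(C)·V₀ = 0`, and the coefficient row `[C₀ … C_{d-1} I]` of the
monic common factor `C` lies in the left null space of the stacked block-Hankel
matrix `K` built from the columns of `V₀`. -/
theorem gcd_from_nullspace_hankel {ι : Type*} (m d ℓ : ℕ)
    (C : Fin (d + 1) → Matrix (Fin m) (Fin m) ℝ)
    (hC : C ⟨d, Nat.lt_succ_self d⟩ = 1)
    (V0 : Matrix (Fin ℓ × Fin m) ι ℝ)
    (hspan : Submodule.span ℝ
        (Set.range fun i : ι =>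
          (show EuclideanSpace ℝ (Fin ℓ × Fin m) from WithLp.toLp 2 fun c => V0 c i)) =
      (Submodule.span ℝ
        (Set.range fun r : Fin (ℓ - d) × Fin m =>
          (show EuclideanSpace ℝ (Fin ℓ × Fin m) from WithLp.toLp 2 fun c => Toep m d ℓ C r c)))ᗮ) :
    Toep m d ℓ C * V0 = 0 ∧
      coeffRow m d C * hankelStack m d ℓ V0 = 0 :=
  gcd_from_nullspace_hankel_general m d ℓ C V0 hspan
end
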